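/- Let x̄ be a feasible point of the nonlinear program (NLP) at which a multiplier vector exists and the Mangasarian–Fromovitz constraint qualification holds. Then there exists ε₀′ > 0 such that for every ε′ ∈ (0, ε₀′) there exists δ′ > 0 with the following property: for any triple (x, λ, μ) ∈ ℝ^n × ℝ^s × ℝ^t with μ ≥ 0 componentwise satisfying (i) ‖x − x̄‖ < δ′, (ii) μ_j = 0 whenever q_j(x) < −δ′, and (iii) ‖∇f(x) + Σ_{i=1}^s λ_i ∇p_i(x) + Σ_{j=1}^t μ_j ∇q_j(x)‖ < δ′, every index set J ⊆ {1,…,t} satisfying q_j(x) > −ε′ for all j ∈ J and μ_j < ε′ for all j ∉ J is sufficient for x̄. -/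

import Mathlib

open scoped RealInnerProductSpace

/-- The index set `J` is sufficient at `xbar` for the nonlinear program with data `f, p, q`. -/
def SufficientIndexSet {n s t : ℕ}
    (f : EuclideanSpace ℝ (Fin n) → ℝ)
    (p : Fin s → EuclideanSpace ℝ (Fin n) → ℝ)
    (q : Fin t → EuclideanSpace ℝ (Fin n) → ℝ)
    (xbar : EuclideanSpace ℝ (Fin n)) (J : Set (Fin t)) : Prop :=
  (∀ j ∈ J, q j xbar = 0) ∧
  ∃ (lam : Fin s → ℝ) (mu : Fin t → ℝ),
    (∀ j, 0 ≤ mu j) ∧ (∀ j, j ∉ J → mu j = 0) ∧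
    gradient f xbar + (∑ i, lam i • gradient (p i) xbar)
      + (∑ j, mu j • gradient (q j) xbar) = 0

/-!
Under MFCQ the linear map `(λ, μ) ↦ Σ λᵢ ∇pᵢ(x̄) + Σ μⱼ ∇qⱼ(x̄)` is bounded below on the cone
of admissible multipliers, so the multiplier set at `x̄` is compact and, by continuity of the
gradients, any approximate KKT triple `(x, λ, μ)` near `x̄` has `(λ, μ)` close to a true
multiplier at `x̄`. For an index set `J` admitting no multiplier vanishing off `J`, compactness
gives a uniform `ε > 0` such that every multiplier at `x̄` has some component `μⱼ ≥ ε` with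
`j ∉ J`; taking `ε₀'` below all these gaps and below the slack of the inactive constraints, a
multiplier close to `(λ, μ)` must vanish off `J`.
-/

open Filter Topology Metric

theorem exists_pos_forall_le_of_finite {ι : Type*} [Finite ι] {d : ι → ℝ}
    (hd : ∀ i, 0 < d i) : ∃ e > 0, ∀ i, e ≤ d i := by
  cases isEmpty_or_nonempty ι
  · exact ⟨1, one_pos, isEmptyElim⟩
  · obtain ⟨i₀, hi₀⟩ := Finite.exists_min d
    exact ⟨d i₀, hd i₀, hi₀⟩

theorem exists_pos_forall_le_neg_of_neg {ι : Type*} [Finite ι] (v : ι → ℝ) :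
    ∃ e > 0, ∀ i, v i < 0 → e ≤ -v i := by
  obtain ⟨e, he, hle⟩ := exists_pos_forall_le_of_finite
    (d := fun i => if v i < 0 then -v i else 1) fun i => by split_ifs <;> linarith
  exact ⟨e, he, fun i hi => by simpa [hi] using hle i⟩

theorem eventually_forall_lt_of_lt {X ι : Type*} [TopologicalSpace X] [Finite ι]
    {g : ι → X → ℝ} {x₀ : X} (hg : ∀ i, ContinuousAt (g i) x₀) (a : ℝ) :
    ∀ᶠ x in 𝓝 x₀, ∀ i, g i x₀ < a → g i x < a :=
  eventually_all.2 fun i => eventually_imp_distrib_left.2 fun h =>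
    (hg i).eventually_lt continuousAt_const h

theorem IsCompact.exists_pos_vanishing_or_gap {X ι : Type*} [TopologicalSpace X] [Fintype ι]
    {M : Set X} (hM : IsCompact M) {u : X → ι → ℝ} (hu : Continuous u) (J : Set ι) :
    ∃ e > 0, (∃ z ∈ M, ∀ j ∉ J, u z j = 0) ∨ ∀ z ∈ M, ∃ j ∉ J, e ≤ |u z j| := by
  classical
  by_cases hvanish : ∃ z ∈ M, ∀ j ∉ J, u z j = 0
  · exact ⟨1, one_pos, .inl hvanish⟩
  push Not at hvanish
  have hcont : Continuous fun z => fun j : ↥Jᶜ => u z j :=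
    continuous_pi fun j => (continuous_apply j.1).comp hu
  have hpos : ∀ z ∈ M, 0 < ‖fun j : ↥Jᶜ => u z j‖ := fun z hz => by
    obtain ⟨j, hj, hne⟩ := hvanish z hz
    refine norm_pos_iff.2 fun h => hne ?_
    simpa using congrFun h ⟨j, hj⟩
  obtain ⟨e, he, hle⟩ := hM.exists_forall_le' hcont.norm.continuousOn hpos
  refine ⟨e, he, .inr fun z hz => ?_⟩
  by_contra! hsmall
  exact (hle z hz).not_gt ((pi_norm_lt_iff he).2 fun j => by simpa using hsmall j j.2)

theorem IsCompact.exists_pos_forall_vanishing_or_gap {X ι : Type*} [TopologicalSpace X] [Fintype ι]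
    {M : Set X} (hM : IsCompact M) {u : X → ι → ℝ} (hu : Continuous u) :
    ∃ e > 0, ∀ J : Set ι, (∃ z ∈ M, ∀ j ∉ J, u z j = 0) ∨ ∀ z ∈ M, ∃ j ∉ J, e ≤ |u z j| := by
  choose e he hgap using hM.exists_pos_vanishing_or_gap hu
  obtain ⟨ε, hε, hεe⟩ := exists_pos_forall_le_of_finite he
  refine ⟨ε, hε, fun J => (hgap J).imp_right fun h z hz => ?_⟩
  obtain ⟨j, hj, hle⟩ := h z hz
  exact ⟨j, hj, (hεe J).trans hle⟩

theorem IsCompact.exists_pos_forall_norm_lt_imp_dist_lt {X F : Type*} [PseudoMetricSpace X]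
    [NormedAddCommGroup F] {K : Set X} (hK : IsCompact K) {φ : X → F} (hφ : ContinuousOn φ K)
    {θ : ℝ} (hθ : 0 < θ) :
    ∃ ρ > 0, ∀ m ∈ K, ‖φ m‖ < ρ → ∃ z ∈ K, φ z = 0 ∧ dist m z < θ := by
  set far := {m | ∀ z ∈ K, φ z = 0 → θ ≤ dist m z}
  have hfar : IsClosed far := by
    simp only [far, Set.ofPred_forall]
    exact isClosed_iInter fun z => isClosed_iInter fun _ => isClosed_iInter fun _ =>
      isClosed_le continuous_const (continuous_id.dist continuous_const)
  obtain ⟨ρ, hρ, hle⟩ := (hK.inter_right hfar).exists_forall_le'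
    (hφ.norm.mono Set.inter_subset_left) (a := 0) fun m ⟨hmK, hmfar⟩ =>
      norm_pos_iff.2 fun h => hθ.not_ge ((hmfar m hmK h).trans_eq (dist_self m))
  refine ⟨ρ, hρ, fun m hmK hm => ?_⟩
  by_contra! hnear
  exact (hle m ⟨hmK, hnear⟩).not_gt hm

section ClosedCone

variable {E F : Type*} [NormedAddCommGroup E] [NormedSpace ℝ E] [FiniteDimensional ℝ E]
  [NormedAddCommGroup F] [NormedSpace ℝ F]
  {C : Set E} (hC : IsClosed C) (hsmul : ∀ r : ℝ, 0 < r → ∀ m ∈ C, r • m ∈ C)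
include hC hsmul

theorem exists_pos_mul_norm_le_norm_of_mem_cone {L : E →L[ℝ] F}
    (hL : ∀ m ∈ C, L m = 0 → m = 0) : ∃ c > 0, ∀ m ∈ C, c * ‖m‖ ≤ ‖L m‖ := by
  obtain ⟨c, hc, hle⟩ := ((isCompact_sphere 0 1).inter_left hC).exists_forall_le'
    L.continuous.norm.continuousOn (a := 0) fun m ⟨hmC, hm1⟩ => norm_pos_iff.2 fun h =>
      by simp [hL m hmC h] at hm1
  refine ⟨c, hc, fun m hmC => ?_⟩
  rcases eq_or_ne m 0 with rfl | hm
  · simp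
  have hpos : 0 < ‖m‖ := norm_pos_iff.2 hm
  have hunit := hle (‖m‖⁻¹ • m) ⟨hsmul _ (inv_pos.2 hpos) m hmC, by simp [norm_smul, hpos.ne']⟩
  rw [map_smul, norm_smul, norm_inv, norm_norm, inv_mul_eq_div, le_div_iff₀ hpos] at hunit
  linarith

theorem isCompact_setOf_mem_cone_add_eq_zero {L : E →L[ℝ] F} (hL : ∀ m ∈ C, L m = 0 → m = 0)
    (b : F) : IsCompact {m ∈ C | b + L m = 0} := by
  obtain ⟨c, hc, hcoer⟩ := exists_pos_mul_norm_le_norm_of_mem_cone hC hsmul hL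
  refine isCompact_of_isClosed_isBounded
    (hC.inter (isClosed_eq (by fun_prop) continuous_const))
    (isBounded_closedBall (x := 0) (r := ‖b‖ / c) |>.subset fun m ⟨hmC, hm⟩ => ?_)
  rw [mem_closedBall_zero_iff, le_div_iff₀ hc, mul_comm, ← norm_neg b,
    neg_eq_of_add_eq_zero_right hm]
  exact hcoer m hmC

/-- Upper semicontinuity of the solution set of `b x + A x m = 0`, `m ∈ C`. -/
theorem exists_pos_forall_dist_lt_of_norm_add_lt {X : Type*} [PseudoMetricSpace X]
    {A : X → E →L[ℝ] F} {b : X → F} {x₀ : X} (hA : ContinuousAt A x₀) (hb : ContinuousAt b x₀)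
    (hinj : ∀ m ∈ C, A x₀ m = 0 → m = 0) {θ : ℝ} (hθ : 0 < θ) :
    ∃ δ > 0, ∀ x, dist x x₀ < δ → ∀ m ∈ C, ‖b x + A x m‖ < δ →
      ∃ z ∈ C, b x₀ + A x₀ z = 0 ∧ dist m z < θ := by
  obtain ⟨c, hc, hcoer⟩ := exists_pos_mul_norm_le_norm_of_mem_cone hC hsmul hinj
  set R := 2 * (‖b x₀‖ + 2) / c
  have hR : 0 < R := by positivity
  obtain ⟨ρ, hρ, hnear⟩ :=
    ((isCompact_closedBall 0 R).inter_left hC).exists_pos_forall_norm_lt_imp_dist_lt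
      (φ := fun m => b x₀ + A x₀ m) (by fun_prop) hθ
  have hAnear : ∀ᶠ x in 𝓝 x₀, ‖A x₀ - A x‖ < min (c / 2) (ρ / (3 * R)) := by
    simpa only [dist_comm, dist_eq_norm] using Metric.tendsto_nhds.1 hA _ (by positivity)
  have hbnear : ∀ᶠ x in 𝓝 x₀, ‖b x₀ - b x‖ < min 1 (ρ / 3) := by
    simpa only [dist_comm, dist_eq_norm] using Metric.tendsto_nhds.1 hb _ (by positivity)
  obtain ⟨δ₀, hδ₀, hδ₀near⟩ := Metric.eventually_nhds_iff.1 (hAnear.and hbnear)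
  refine ⟨min δ₀ (min 1 (ρ / 3)), by positivity, fun x hx m hmC hres => ?_⟩
  obtain ⟨hAx, hbx⟩ := hδ₀near (hx.trans_le (min_le_left _ _))
  simp only [lt_min_iff] at hAx hbx hres
  have hpert : ‖(A x₀ - A x) m‖ ≤ ‖A x₀ - A x‖ * ‖m‖ := (A x₀ - A x).le_opNorm m
  have hmR : ‖m‖ ≤ R := by
    have h1 : ‖A x₀ m‖ ≤ ‖b x + A x m‖ + ‖b x₀ - b x‖ + ‖-b x₀‖ + ‖(A x₀ - A x) m‖ := by
      calc ‖A x₀ m‖ = ‖(b x + A x m) + (b x₀ - b x) + -b x₀ + (A x₀ - A x) m‖ := by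
            simp only [sub_apply]; abel_nf
        _ ≤ _ := norm_add₄_le
    rw [norm_neg] at h1
    have h2 : ‖A x₀ - A x‖ * ‖m‖ ≤ c / 2 * ‖m‖ := by gcongr; exact hAx.1.le
    rw [le_div_iff₀ hc]
    nlinarith [hcoer m hmC]
  have hres₀ : ‖b x₀ + A x₀ m‖ < ρ := by
    have h2 : ‖A x₀ - A x‖ * ‖m‖ ≤ ρ / (3 * R) * R := by gcongr; exact hAx.2.le
    have h3 : ρ / (3 * R) * R = ρ / 3 := by field_simp
    calc ‖b x₀ + A x₀ m‖ = ‖(b x + A x m) + (b x₀ - b x) + (A x₀ - A x) m‖ := by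
          simp only [sub_apply]; abel_nf
      _ ≤ ‖b x + A x m‖ + ‖b x₀ - b x‖ + ‖(A x₀ - A x) m‖ := norm_add₃_le
      _ < ρ := by linarith
  obtain ⟨z, ⟨hzC, -⟩, hz, hmz⟩ := hnear m ⟨hmC, mem_closedBall_zero_iff.2 hmR⟩ hres₀
  exact ⟨z, hzC, hz, hmz⟩

end ClosedCone

theorem ContDiff.continuous_gradient {F : Type*} [NormedAddCommGroup F] [InnerProductSpace ℝ F]
    [CompleteSpace F] {g : F → ℝ} (hg : ContDiff ℝ 1 g) : Continuous (gradient g) :=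
  (InnerProductSpace.toDual ℝ F).symm.continuous.comp (hg.continuous_fderiv one_ne_zero)

def multiplierCone {κ ι : Type*} (I : Set ι) : Set ((κ → ℝ) × (ι → ℝ)) :=
  {m | (∀ j, 0 ≤ m.2 j) ∧ ∀ j ∈ I, m.2 j = 0}

theorem isClosed_multiplierCone {κ ι : Type*} (I : Set ι) :
    IsClosed (multiplierCone (κ := κ) I) := by
  simp only [multiplierCone, Set.ofPred_and, Set.ofPred_forall]
  exact (isClosed_iInter fun j => isClosed_le continuous_const (by fun_prop)).inter
    (isClosed_iInter fun j => isClosed_iInter fun _ => isClosed_eq (by fun_prop) continuous_const)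

theorem smul_mem_multiplierCone {κ ι : Type*} {I : Set ι} {r : ℝ} (hr : 0 ≤ r)
    {m : (κ → ℝ) × (ι → ℝ)} (hm : m ∈ multiplierCone I) : r • m ∈ multiplierCone I :=
  ⟨fun j => mul_nonneg hr (hm.1 j), fun j hj => by simp [hm.2 j hj]⟩

theorem abs_snd_apply_le_add_dist {κ ι : Type*} [Fintype κ] [Fintype ι]
    (m z : (κ → ℝ) × (ι → ℝ)) (j : ι) : |z.2 j| ≤ |m.2 j| + dist m z := by
  have hdist : dist (m.2 j) (z.2 j) ≤ dist m z :=
    (dist_le_pi_dist m.2 z.2 j).trans (by rw [Prod.dist_eq]; exact le_max_right _ _)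
  rw [Real.dist_eq] at hdist
  linarith [abs_sub_abs_le_abs_sub (z.2 j) (m.2 j), abs_sub_comm (z.2 j) (m.2 j)]

section NLP

variable {n s t : ℕ} {f : EuclideanSpace ℝ (Fin n) → ℝ}
  {p : Fin s → EuclideanSpace ℝ (Fin n) → ℝ} {q : Fin t → EuclideanSpace ℝ (Fin n) → ℝ}
  {xbar : EuclideanSpace ℝ (Fin n)}

variable (p q) in
noncomputable def constraintGradientMap (x : EuclideanSpace ℝ (Fin n)) :
    (Fin s → ℝ) × (Fin t → ℝ) →L[ℝ] EuclideanSpace ℝ (Fin n) :=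
  ∑ i, ((ContinuousLinearMap.proj i).comp (ContinuousLinearMap.fst ℝ _ _)).smulRight
      (gradient (p i) x) +
    ∑ j, ((ContinuousLinearMap.proj j).comp (ContinuousLinearMap.snd ℝ _ _)).smulRight
      (gradient (q j) x)

@[simp]
theorem constraintGradientMap_apply (x : EuclideanSpace ℝ (Fin n))
    (m : (Fin s → ℝ) × (Fin t → ℝ)) :
    constraintGradientMap p q x m =
      ∑ i, m.1 i • gradient (p i) x + ∑ j, m.2 j • gradient (q j) x := by
  simp [constraintGradientMap]

theorem continuous_constraintGradientMap (hp : ∀ i, ContDiff ℝ 1 (p i))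
    (hq : ∀ j, ContDiff ℝ 1 (q j)) : Continuous (constraintGradientMap p q) := by
  refine continuous_clm_apply.2 fun m => ?_
  have := fun i => (hp i).continuous_gradient
  have := fun j => (hq j).continuous_gradient
  simp only [constraintGradientMap_apply]
  fun_prop

variable (f p q xbar) in
def multiplierSet : Set ((Fin s → ℝ) × (Fin t → ℝ)) :=
  {m ∈ multiplierCone {j | q j xbar < 0} |
    gradient f xbar + constraintGradientMap p q xbar m = 0}

theorem sufficientIndexSet_of_mem_multiplierSet {J : Set (Fin t)} {z : (Fin s → ℝ) × (Fin t → ℝ)}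
    (hz : z ∈ multiplierSet f p q xbar) (hJ : ∀ j ∈ J, q j xbar = 0)
    (hzJ : ∀ j ∉ J, z.2 j = 0) : SufficientIndexSet f p q xbar J :=
  ⟨hJ, z.1, z.2, hz.1.1, hzJ, by simpa [multiplierSet, add_assoc] using hz.2⟩

variable (hMFCQ : ∀ m ∈ multiplierCone {j | q j xbar < 0},
  constraintGradientMap p q xbar m = 0 → m = 0)
include hMFCQ

theorem isCompact_multiplierSet : IsCompact (multiplierSet f p q xbar) :=
  isCompact_setOf_mem_cone_add_eq_zero (isClosed_multiplierCone _)
    (fun _ hr _ hm => smul_mem_multiplierCone hr.le hm) hMFCQ _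

theorem exists_pos_forall_dist_multiplierSet_lt (hf : ContDiff ℝ 1 f)
    (hp : ∀ i, ContDiff ℝ 1 (p i)) (hq : ∀ j, ContDiff ℝ 1 (q j)) {θ : ℝ} (hθ : 0 < θ) :
    ∃ δ > 0, ∀ (x : EuclideanSpace ℝ (Fin n)) (lam : Fin s → ℝ) (mu : Fin t → ℝ),
      (lam, mu) ∈ multiplierCone {j | q j xbar < 0} → ‖x - xbar‖ < δ →
      ‖gradient f x + (∑ i, lam i • gradient (p i) x) + (∑ j, mu j • gradient (q j) x)‖ < δ →
      ∃ z ∈ multiplierSet f p q xbar, dist (lam, mu) z < θ := by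
  obtain ⟨δ, hδ, hstab⟩ := exists_pos_forall_dist_lt_of_norm_add_lt (isClosed_multiplierCone _)
    (fun _ hr _ hm => smul_mem_multiplierCone hr.le hm)
    (continuous_constraintGradientMap hp hq).continuousAt hf.continuous_gradient.continuousAt
    hMFCQ hθ
  refine ⟨δ, hδ, fun x lam mu hm hx hres => ?_⟩
  obtain ⟨z, hzC, hz, hmz⟩ := hstab x (by rwa [dist_eq_norm]) (lam, mu) hm
    (by simpa [add_assoc] using hres)
  exact ⟨z, ⟨hzC, hz⟩, hmz⟩

end NLP

theorem nlp_identification_general {n s t : ℕ}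
    (f : EuclideanSpace ℝ (Fin n) → ℝ)
    (p : Fin s → EuclideanSpace ℝ (Fin n) → ℝ)
    (q : Fin t → EuclideanSpace ℝ (Fin n) → ℝ)
    (hf : ContDiff ℝ 1 f) (hp : ∀ i, ContDiff ℝ 1 (p i)) (hq : ∀ j, ContDiff ℝ 1 (q j))
    (xbar : EuclideanSpace ℝ (Fin n))
    (hfeas : (∀ i, p i xbar = 0) ∧ (∀ j, q j xbar ≤ 0))
    (hMFCQ : ∀ (lam : Fin s → ℝ) (mu : Fin t → ℝ),
      (∀ j, 0 ≤ mu j) → (∀ j, q j xbar < 0 → mu j = 0) →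
      (∑ i, lam i • gradient (p i) xbar) + (∑ j, mu j • gradient (q j) xbar) = 0 →
      lam = 0 ∧ mu = 0) :
    ∃ ε₀' > (0 : ℝ), ∀ ε' ∈ Set.Ioo (0 : ℝ) ε₀', ∃ δ' > (0 : ℝ),
      ∀ (x : EuclideanSpace ℝ (Fin n)) (lam : Fin s → ℝ) (mu : Fin t → ℝ),
        (∀ j, 0 ≤ mu j) →
        ‖x - xbar‖ < δ' →
        (∀ j, q j x < -δ' → mu j = 0) →
        ‖gradient f x + (∑ i, lam i • gradient (p i) x)
          + (∑ j, mu j • gradient (q j) x)‖ < δ' →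
        ∀ J : Set (Fin t),
          (∀ j ∈ J, q j x > -ε') →
          (∀ j, j ∉ J → mu j < ε') →
          SufficientIndexSet f p q xbar J := by
  have hinj : ∀ m ∈ multiplierCone {j | q j xbar < 0},
      constraintGradientMap p q xbar m = 0 → m = 0 := fun m hm h0 =>
    Prod.ext_iff.2 (hMFCQ m.1 m.2 hm.1 hm.2 (by simpa using h0))
  obtain ⟨ε₁, hε₁, hinact⟩ := exists_pos_forall_le_neg_of_neg (q · xbar)
  obtain ⟨ε₂, hε₂, hgap⟩ :=
    (isCompact_multiplierSet hinj).exists_pos_forall_vanishing_or_gap continuous_snd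
  refine ⟨min ε₁ ε₂, by positivity, fun ε' ⟨hε', hε'₀⟩ => ?_⟩
  obtain ⟨δ, hδ, hstab⟩ := exists_pos_forall_dist_multiplierSet_lt hinj hf hp hq (sub_pos.2 hε'₀)
  obtain ⟨δq, hδq, hqnear⟩ := Metric.eventually_nhds_iff.1
    (eventually_forall_lt_of_lt (fun j => (hq j).continuous.continuousAt) (-ε'))
  refine ⟨min δ (min δq ε'), by positivity, fun x lam mu hmu hx hmuzero hres J hJq hJmu => ?_⟩
  simp only [lt_min_iff] at hx hres
  have hqx : ∀ j, q j xbar < 0 → q j x < -ε' := fun j hj =>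
    hqnear (by rw [dist_eq_norm]; exact hx.2.1) j (by linarith [hinact j hj, min_le_left ε₁ ε₂])
  have hmC : (lam, mu) ∈ multiplierCone {j | q j xbar < 0} :=
    ⟨hmu, fun j hj => hmuzero j
      (by linarith [hqx j hj, min_le_right δ (min δq ε'), min_le_right δq ε'])⟩
  have hJ : ∀ j ∈ J, q j xbar = 0 := fun j hj =>
    (hfeas.2 j).antisymm (not_lt.1 fun hlt => (hJq j hj).not_gt (hqx j hlt))
  obtain ⟨z, hz, hmz⟩ := hstab x lam mu hmC hx.1 hres.1
  rcases hgap J with ⟨z', hz', hz'J⟩ | hbad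
  · exact sufficientIndexSet_of_mem_multiplierSet hz' hJ hz'J
  · obtain ⟨j, hj, hle⟩ := hbad z hz
    -- `ε₂ ≤ |zⱼ| ≤ μⱼ + dist (λ, μ) z < ε' + (min ε₁ ε₂ - ε')`
    linarith [abs_snd_apply_le_add_dist (lam, mu) z j, abs_of_nonneg (hmu j), hJmu j hj,
      min_le_right ε₁ ε₂]

theorem nlp_identification {n s t : ℕ}
    (f : EuclideanSpace ℝ (Fin n) → ℝ)
    (p : Fin s → EuclideanSpace ℝ (Fin n) → ℝ)
    (q : Fin t → EuclideanSpace ℝ (Fin n) → ℝ)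
    (hf : ContDiff ℝ 1 f) (hp : ∀ i, ContDiff ℝ 1 (p i)) (hq : ∀ j, ContDiff ℝ 1 (q j))
    (xbar : EuclideanSpace ℝ (Fin n))
    (hfeas : (∀ i, p i xbar = 0) ∧ (∀ j, q j xbar ≤ 0))
    (hmult : ∃ (lam : Fin s → ℝ) (mu : Fin t → ℝ),
      (∀ j, 0 ≤ mu j) ∧ (∀ j, q j xbar < 0 → mu j = 0) ∧
      gradient f xbar + (∑ i, lam i • gradient (p i) xbar)
        + (∑ j, mu j • gradient (q j) xbar) = 0)
    (hMFCQ : ∀ (lam : Fin s → ℝ) (mu : Fin t → ℝ),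
      (∀ j, 0 ≤ mu j) → (∀ j, q j xbar < 0 → mu j = 0) →
      (∑ i, lam i • gradient (p i) xbar) + (∑ j, mu j • gradient (q j) xbar) = 0 →
      lam = 0 ∧ mu = 0) :
    ∃ ε₀' > (0 : ℝ), ∀ ε' ∈ Set.Ioo (0 : ℝ) ε₀', ∃ δ' > (0 : ℝ),
      ∀ (x : EuclideanSpace ℝ (Fin n)) (lam : Fin s → ℝ) (mu : Fin t → ℝ),
        (∀ j, 0 ≤ mu j) →
        ‖x - xbar‖ < δ' →
        (∀ j, q j x < -δ' → mu j = 0) →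
        ‖gradient f x + (∑ i, lam i • gradient (p i) x)
          + (∑ j, mu j • gradient (q j) x)‖ < δ' →
        ∀ J : Set (Fin t),
          (∀ j ∈ J, q j x > -ε') →
          (∀ j, j ∉ J → mu j < ε') →
          SufficientIndexSet f p q xbar J :=
  nlp_identification_general f p q hf hp hq xbar hfeas hMFCQ
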